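/- Let H be a nontrivial additive subgroup of ℝ. Let Z_H = (ℝ × H)_max be the semiring whose nonzero elements are pairs (x,h) ∈ ℝ × H with a zero element 0, addition given by the maximum for the lexicographic order on ℝ × H (i.e., (x,h) ∨ (x',h') = (x,h) if x > x', = (x',h') if x' > x, and = (x, max(h,h')) if x = x'), and multiplication (x,h) • (x',h') = (x+x', h+h'). Regard ℝ_max as embedded in Z_H via x ↦ (x,0), −∞ ↦ 0. Then the only semiring homomorphism φ : Z_H → ℝ_max restricting to the identity on ℝ_max is given by φ(x,h) = x and φ(0) = −∞. -/
import Mathlib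


/-- A nonzero element `(x, h)` of the semiring `Z_H = (ℝ × H)_max` associated to the
lexicographically ordered group `ℝ × H`. -/
structure ZHElem (H : AddSubgroup ℝ) where
  x : ℝ
  h : ℝ
  h_mem : h ∈ H

/-- Addition (lexicographic max) on `Z_H = Option (ZHElem H)`, with `none` the zero element. -/
noncomputable def zhAdd {H : AddSubgroup ℝ} :
    Option (ZHElem H) → Option (ZHElem H) → Option (ZHElem H)
  | none, b => b
  | some a, none => some a
  | some a, some b =>
    if a.x > b.x then some a
    else if b.x > a.x then some b
    else some ⟨a.x, max a.h b.h, by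
      rcases le_total a.h b.h with hab | hab
      · rw [max_eq_right hab]; exact b.h_mem
      · rw [max_eq_left hab]; exact a.h_mem⟩

/-- Multiplication (componentwise addition) on `Z_H = Option (ZHElem H)`. -/
def zhMul {H : AddSubgroup ℝ} :
    Option (ZHElem H) → Option (ZHElem H) → Option (ZHElem H)
  | none, _ => none
  | some _, none => none
  | some a, some b => some ⟨a.x + b.x, a.h + b.h, add_mem a.h_mem b.h_mem⟩

/-- The embedding of `ℝ_max = ℝ ∪ {-∞}` into `Z_H`, `x ↦ (x,0)`, `-∞ ↦ 0`. -/
def zhOfRmax (H : AddSubgroup ℝ) : WithBot ℝ → Option (ZHElem H)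
  | ⊥ => none
  | (x : ℝ) => some ⟨x, 0, zero_mem H⟩

/-- for a nontrivial subgroup `H ⊆ ℝ`, the only semiring homomorphism
`φ : Z_H → ℝ_max` restricting to the identity on `ℝ_max` is `(x,h) ↦ x`, `0 ↦ -∞`
(here `ℝ_max` is `WithBot ℝ` with addition `max` and multiplication `+`). -/
theorem statement11 (H : AddSubgroup ℝ) (hH : H ≠ ⊥) :
    (((∀ a b : Option (ZHElem H),
          (zhAdd a b).elim (⊥ : WithBot ℝ) (fun e => (e.x : WithBot ℝ)) =
            max (a.elim ⊥ fun e => (e.x : WithBot ℝ)) (b.elim ⊥ fun e => (e.x : WithBot ℝ))) ∧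
        (∀ a b : Option (ZHElem H),
          (zhMul a b).elim (⊥ : WithBot ℝ) (fun e => (e.x : WithBot ℝ)) =
            (a.elim ⊥ fun e => (e.x : WithBot ℝ)) + (b.elim ⊥ fun e => (e.x : WithBot ℝ))) ∧
        (∀ r : WithBot ℝ,
          (zhOfRmax H r).elim (⊥ : WithBot ℝ) (fun e => (e.x : WithBot ℝ)) = r))) ∧
    ∀ φ : Option (ZHElem H) → WithBot ℝ,
      (∀ a b, φ (zhAdd a b) = max (φ a) (φ b)) →
      (∀ a b, φ (zhMul a b) = φ a + φ b) →
      (∀ r : WithBot ℝ, φ (zhOfRmax H r) = r) →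
      ∀ a : Option (ZHElem H), φ a = a.elim ⊥ (fun e => (e.x : WithBot ℝ)) := by

  constructor
  · refine ⟨?_, ?_, ?_⟩
    · intro a b
      cases a with
      | none => simp [zhAdd]
      | some a =>
        cases b with
        | none => simp [zhAdd]
        | some b =>
          simp only [zhAdd, Option.elim]
          split_ifs with h1 h2
          · rw [max_eq_left (by exact_mod_cast h1.le)]
          · rw [max_eq_right (by exact_mod_cast h2.le)]
          · have : a.x = b.x := le_antisymm (not_lt.mp h1) (not_lt.mp h2)
            rw [this, max_self]
    · intro a b
      cases a with
      | none => simp [zhMul]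
      | some a =>
        cases b with
        | none => simp [zhMul]
        | some b => simp [zhMul, WithBot.coe_add]
    · intro r
      cases r with
      | bot => simp [zhOfRmax]
      | coe x => simp [zhOfRmax]
  · intro φ hadd hmul hres
    have hbot : φ none = ⊥ := by simpa [zhOfRmax] using hres ⊥
    have hreal : ∀ x : ℝ, φ (some ⟨x, 0, zero_mem H⟩) = (x : WithBot ℝ) := fun x => by
      simpa [zhOfRmax] using hres (x : ℝ)
    have key : ∀ (h : ℝ) (hm : h ∈ H), φ (some ⟨0, h, hm⟩) = (0 : WithBot ℝ) := by
      intro h hm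
      set t := φ (some ⟨0, h, hm⟩) with ht
      have hub : ∀ ε : ℝ, 0 < ε → t ≤ (ε : WithBot ℝ) := by
        intro ε hε
        have h1 := hadd (some ⟨0, h, hm⟩) (some ⟨ε, 0, zero_mem H⟩)
        have e : zhAdd (some (⟨0, h, hm⟩ : ZHElem H)) (some ⟨ε, 0, zero_mem H⟩)
            = some ⟨ε, 0, zero_mem H⟩ := by
          simp only [zhAdd]
          rw [if_neg (by simpa using hε.le), if_pos (by simpa using hε)]
        rw [e, hreal] at h1
        exact max_eq_right_iff.mp h1.symm
      have hlb : ∀ ε : ℝ, 0 < ε → ((-ε : ℝ) : WithBot ℝ) ≤ t := by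
        intro ε hε
        have h1 := hadd (some ⟨0, h, hm⟩) (some ⟨-ε, 0, zero_mem H⟩)
        have e : zhAdd (some (⟨0, h, hm⟩ : ZHElem H)) (some ⟨-ε, 0, zero_mem H⟩)
            = some ⟨0, h, hm⟩ := by
          simp only [zhAdd]
          rw [if_pos (by simpa using hε)]
        rw [e, hreal] at h1
        exact max_eq_left_iff.mp h1.symm
      have htne : t ≠ ⊥ := by
        intro hb
        have := hlb 1 one_pos
        rw [hb] at this
        exact absurd (le_bot_iff.mp this) (by simp)
      obtain ⟨u, hu⟩ := WithBot.ne_bot_iff_exists.mp htne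
      have hule : u ≤ 0 := by
        apply le_of_forall_pos_le_add
        intro ε hε
        have := hub ε hε
        rw [← hu] at this
        rw [zero_add]
        exact_mod_cast this
      have huge : 0 ≤ u := by
        have : ∀ ε : ℝ, 0 < ε → -ε ≤ u := by
          intro ε hε
          have := hlb ε hε
          rw [← hu] at this
          exact_mod_cast this
        by_contra hneg
        push_neg at hneg
        have h2 := this (-u / 2) (by linarith)
        linarith
      have : u = 0 := le_antisymm hule huge
      rw [← hu, this]; rfl
    intro a
    cases a with
    | none => simpa using hbot
    | some a =>
      obtain ⟨x, h, hm⟩ := a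
      have h1 := hmul (some ⟨x, 0, zero_mem H⟩) (some ⟨0, h, hm⟩)
      have e : zhMul (some (⟨x, 0, zero_mem H⟩ : ZHElem H)) (some ⟨0, h, hm⟩)
          = some ⟨x, h, hm⟩ := by
        simp [zhMul]
      rw [e, hreal, key] at h1
      simpa using h1
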